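/- Let p be an odd prime and T the Heisenberg group of order p³: T is generated by A, B with relations A^p = B^p = [A,B]^p = [A,[A,B]] = [B,[A,B]] = 1. Let H = ⟨B, [A,B]⟩ ≅ (Z/p)², with dual basis e₁^∨, e₂^∨ where e₁ = B, e₂ = [A,B]. Then Cores_H^T(e₁^∨ ∪ e₁^∨) = 0 and Cores_H^T(e₁^∨ ∪ e₂^∨) = 0 in H³(T, Q/Z). -/

import Mathlib

open scoped BigOperators Classical
open scoped commutatorElement

/-- The group `ℚ/ℤ`. -/
abbrev QZ : Type := AddCircle (1 : ℚ)

/-- The differential on inhomogeneous group cochains with trivial coefficients in `ℚ/ℤ`. -/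
noncomputable def cochainD {G : Type*} [Group G] {n : ℕ} (f : (Fin n → G) → QZ) :
    (Fin (n + 1) → G) → QZ := fun g =>
  f (fun i => g i.succ) +
    (∑ i : Fin n, ((-1 : ℤ) ^ ((i : ℕ) + 1)) •
      f (fun j => if (j : ℕ) < (i : ℕ) then g (Fin.castSucc j)
        else if (j : ℕ) = (i : ℕ) then g (Fin.castSucc j) * g j.succ
        else g j.succ)) +
    ((-1 : ℤ) ^ (n + 1)) • f (fun i => g (Fin.castSucc i))

/-- A cochain is a cocycle if its differential vanishes. -/
noncomputable def IsCocycle {G : Type*} [Group G] {n : ℕ} (f : (Fin n → G) → QZ) : Prop :=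
  cochainD f = 0

/-- A cochain is a coboundary if it is the differential of a cochain of one degree lower
(in degree `0` this means that it vanishes). -/
noncomputable def IsCoboundary {G : Type*} [Group G] : {n : ℕ} → ((Fin n → G) → QZ) → Prop
  | 0, f => f = 0
  | (_ + 1), f => ∃ h, cochainD h = f

/-- Extension by zero of a cochain on a subgroup to a cochain on the ambient group. -/
noncomputable def restrictTo {G : Type*} [Group G] (H : Subgroup G) {n : ℕ}
    (f : (Fin n → H) → QZ) : (Fin n → G) → QZ := fun g =>
  if h : ∀ i, g i ∈ H then f (fun i => ⟨g i, h i⟩) else 0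

/-- The transfer (corestriction) of an inhomogeneous cochain on a subgroup `H` of `G`
along a section `σ` of the space of right cosets of `H` in `G`. -/
noncomputable def transfer {G : Type*} [Group G] (H : Subgroup G)
    (σ : Quotient (QuotientGroup.rightRel H) → G) {n : ℕ}
    (f : (Fin n → H) → QZ) : (Fin n → G) → QZ := fun g =>
  ∑ᶠ x : Quotient (QuotientGroup.rightRel H),
    restrictTo H f (fun i =>
      σ (Quotient.mk (QuotientGroup.rightRel H) (σ x * ((List.ofFn g).take i).prod))
        * g i *
      (σ (Quotient.mk (QuotientGroup.rightRel H)
          (σ x * ((List.ofFn g).take ((i : ℕ) + 1)).prod)))⁻¹)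

/-- `σ` is a section of the right coset space. -/
def IsSection {G : Type*} [Group G] (H : Subgroup G)
    (σ : Quotient (QuotientGroup.rightRel H) → G) : Prop :=
  ∀ x, Quotient.mk (QuotientGroup.rightRel H) (σ x) = x

/-- Additive characters with values in `ℚ/ℤ`. -/
def IsChar {G : Type*} [Group G] (χ : G → QZ) : Prop :=
  ∀ a b, χ (a * b) = χ a + χ b

/-- The explicit 3-cocycle representing the cup product `χ ∪ χ'` of two degree-one classes,
written in terms of rational lifts `a` of `χ` and `b` of `χ'`. -/
noncomputable def cup3 {H : Type*} [Group H] (a b : H → ℚ) : (Fin 3 → H) → QZ := fun g =>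
  (((a (g 0) + a (g 1) - a (g 0 * g 1)) * b (g 2) : ℚ) : QZ)

/-- The Hochschild–Serre filtration on cochains: `f` lies in filtration `p` with respect to a
normal subgroup `K` if it is invariant under translating its last `p` arguments by `K`. -/
def inFilt {G : Type*} [Group G] (K : Subgroup G) (p : ℕ) {n : ℕ}
    (f : (Fin n → G) → QZ) : Prop :=
  ∀ (g κ : Fin n → G), (∀ i, κ i ∈ K) → (∀ i : Fin n, (i : ℕ) < n - p → κ i = 1) →
    f (fun i => g i * κ i) = f g

/-- The Heisenberg group of order `p³`: triples `(a,b,c)` over `ℤ/p` with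
`(a,b,c)·(a',b',c') = (a+a', b+b', c+c'+ab')`.  It is generated by `A = (1,0,0)` and
`B = (0,1,0)`, with `[A,B] = (0,0,1)`, and satisfies the relations
`A^p = B^p = [A,B]^p = [A,[A,B]] = [B,[A,B]] = 1`. -/
def Heis (p : ℕ) : Type := ZMod p × ZMod p × ZMod p

namespace Heis

variable {p : ℕ}

private def hmul (x y : Heis p) : Heis p :=
  (x.1 + y.1, x.2.1 + y.2.1, x.2.2 + y.2.2 + x.1 * y.2.1)

private def hinv (x : Heis p) : Heis p := (-x.1, -x.2.1, -x.2.2 + x.1 * x.2.1)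

instance : Group (Heis p) where
  mul := hmul
  one := ((0 : ZMod p), (0 : ZMod p), (0 : ZMod p))
  inv := hinv
  mul_assoc a b c := by
    show hmul (hmul a b) c = hmul a (hmul b c)
    simp only [hmul]
    exact Prod.ext (by ring) (Prod.ext (by ring) (by ring))
  one_mul a := by
    show hmul (0, 0, 0) a = a
    simp only [hmul]
    exact Prod.ext (by simp) (Prod.ext (by simp) (by simp))
  mul_one a := by
    show hmul a (0, 0, 0) = a
    simp only [hmul]
    exact Prod.ext (by simp) (Prod.ext (by simp) (by simp))
  inv_mul_cancel a := by
    show hmul (hinv a) a = (0, 0, 0)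
    simp only [hmul, hinv]
    exact Prod.ext (by ring) (Prod.ext (by ring) (by ring))

/-- The subgroup `H = ⟨B, [A,B]⟩ = {(0,b,c)} ≅ (ℤ/p)²` of the Heisenberg group. -/
def Hsub (p : ℕ) : Subgroup (Heis p) where
  carrier := {x | x.1 = 0}
  mul_mem' := by
    intro a b (ha : a.1 = 0) (hb : b.1 = 0)
    show a.1 + b.1 = 0
    simp [ha, hb]
  one_mem' := rfl
  inv_mem' := by
    intro a (ha : a.1 = 0)
    show -a.1 = 0
    simp [ha]

end Heis


/-- The generator `A = (1,0,0)` of the Heisenberg group. -/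
def Heis.A (p : ℕ) : Heis p := (1, 0, 0)

/-- The generator `B = (0,1,0)` of the Heisenberg group. -/
def Heis.B (p : ℕ) : Heis p := (0, 1, 0)

/-- The rational lift of the character `e₁^∨ : (0,b,c) ↦ b/p` of `H = ⟨B,[A,B]⟩`. -/
noncomputable def l1 {p : ℕ} (h : Heis.Hsub p) : ℚ := ((h : Heis p).2.1.val : ℚ) / p

/-- The rational lift of the character `e₂^∨ : (0,b,c) ↦ c/p` of `H = ⟨B,[A,B]⟩`. -/
noncomputable def l2 {p : ℕ} (h : Heis.Hsub p) : ℚ := ((h : Heis p).2.2.val : ℚ) / p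

/-! `cup3 a b` represents `χ ∪ ψ` as `δa ∪ b`, where `δa = a g + a h - a (g h)` is the integral
coboundary of a rational lift `a` of the character `χ`. When `χ` is a character of the whole
group, `δa` evaluated at Schreier elements `σ(x) g σ(xg)⁻¹` equals `δa(g₀, g₁)` up to an explicit
integral coboundary. The transfer of `cup3 a b` is therefore `δa(g₀, g₁) • Cores(ψ)(g₂)` plus the
coboundary of an explicit 2-cochain: this is the projection formula
`Cores(Res χ ∪ ψ) = χ ∪ Cores ψ` at the level of cochains.

For the Heisenberg group, `e₁^∨` is the restriction of the character `(a, b, c) ↦ b/p` of `T`, and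
both `e₁^∨` and `e₂^∨` have zero transfer: the Schreier elements of `g` have `b`-coordinates
summing to `p • g.2.1 = 0`, and `c`-coordinates summing to `(∑_{t : ℤ/p} t) • g.2.1 = 0` for
odd `p`. -/

abbrev RightCosets {G : Type*} [Group G] (H : Subgroup G) : Type _ :=
  Quotient (QuotientGroup.rightRel H)

namespace RightCosets

variable {G : Type*} [Group G] {H : Subgroup G}

def mulRight (x : RightCosets H) (g : G) : RightCosets H :=
  Quotient.map' (· * g)
    (fun a b hab => by
      rw [QuotientGroup.rightRel_apply] at hab ⊢
      simpa [mul_assoc] using hab) x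

theorem mul_one (x : RightCosets H) : x.mulRight 1 = x := by
  induction x using Quotient.inductionOn
  exact congrArg (Quotient.mk _) (_root_.mul_one _)

theorem mul_mul (x : RightCosets H) (g h : G) :
    x.mulRight (g * h) = (x.mulRight g).mulRight h := by
  induction x using Quotient.inductionOn
  exact congrArg (Quotient.mk _) (mul_assoc _ _ _).symm

def mulRightEquiv (g : G) : RightCosets H ≃ RightCosets H where
  toFun (x : RightCosets H) := x.mulRight g
  invFun (x : RightCosets H) := x.mulRight g⁻¹
  left_inv x := by simp only [← mul_mul, mul_inv_cancel, mul_one]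
  right_inv x := by simp only [← mul_mul, inv_mul_cancel, mul_one]

theorem sum_mulRight {M : Type*} [AddCommMonoid M] [Fintype (RightCosets H)] (g : G)
    (f : RightCosets H → M) : ∑ x : RightCosets H, f (x.mulRight g) = ∑ x, f x :=
  Fintype.sum_equiv (mulRightEquiv g) _ _ fun _ => rfl

end RightCosets

theorem cochainD_two {G : Type*} [Group G] (h : (Fin 2 → G) → QZ) (g : Fin 3 → G) :
    cochainD h g =
      h ![g 1, g 2] - h ![g 0 * g 1, g 2] + h ![g 0, g 1 * g 2] - h ![g 0, g 1] := by
  have e₁ : (fun i : Fin 2 => g i.succ) = ![g 1, g 2] := by funext i; fin_cases i <;> rfl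
  have e₂ : (fun j : Fin 2 => if (j : ℕ) < 0 then g j.castSucc
      else if (j : ℕ) = 0 then g j.castSucc * g j.succ else g j.succ) = ![g 0 * g 1, g 2] := by
    funext j; fin_cases j <;> rfl
  have e₃ : (fun j : Fin 2 => if (j : ℕ) < 1 then g j.castSucc
      else if (j : ℕ) = 1 then g j.castSucc * g j.succ else g j.succ) = ![g 0, g 1 * g 2] := by
    funext j; fin_cases j <;> rfl
  have e₄ : (fun i : Fin 2 => g i.castSucc) = ![g 0, g 1] := by funext i; fin_cases i <;> rfl
  rw [cochainD, Fin.sum_univ_two]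
  simp only [Fin.val_zero, Fin.val_one, e₁, e₂, e₃, e₄]
  norm_num
  abel

theorem IsChar.exists_int_defect {G : Type*} [Group G] {a : G → ℚ}
    (ha : IsChar fun g => (a g : QZ)) (g h : G) : ∃ n : ℤ, a g + a h - a (g * h) = n := by
  have hgh := ha g h
  rw [← AddCircle.coe_add, eq_comm, ← sub_eq_zero, ← AddCircle.coe_sub,
    AddCircle.coe_eq_zero_iff] at hgh
  obtain ⟨n, hn⟩ := hgh
  exact ⟨n, by simpa using hn.symm⟩

section Transfer

open RightCosets

variable {G : Type*} [Group G] {H : Subgroup G}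

def schreier (σ : RightCosets H → G) (x : RightCosets H) (g : G) : G :=
  σ x * g * (σ (x.mulRight g))⁻¹

/-- With `δ` the integral defect of a lift `a`, this is
`a (schreier σ x g) + a (σ (x.mulRight g)) - a (σ x) - a g`. -/
def schreierDefect (σ : RightCosets H → G) (δ : G → G → ℤ) (x : RightCosets H) (g : G) : ℤ :=
  δ (schreier σ x g) (σ (x.mulRight g)) - δ (σ x) g

variable {σ : RightCosets H → G}

theorem schreier_mul (x : RightCosets H) (g h : G) :
    schreier σ x (g * h) = schreier σ x g * schreier σ (x.mulRight g) h := by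
  simp only [schreier, RightCosets.mul_mul]
  group

theorem schreier_mul_section (x : RightCosets H) (g : G) :
    schreier σ x g * σ (x.mulRight g) = σ x * g := by
  simp only [schreier, inv_mul_cancel_right]

theorem defect_schreier_schreier {a : G → ℚ} {δ : G → G → ℤ}
    (hδ : ∀ g h, a g + a h - a (g * h) = δ g h) (x : RightCosets H) (g h : G) :
    δ (schreier σ x g) (schreier σ (x.mulRight g) h) =
      δ g h + schreierDefect σ δ x g + schreierDefect σ δ (x.mulRight g) h
        - schreierDefect σ δ x (g * h) := by
  refine Int.cast_injective (α := ℚ) ?_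
  simp only [schreierDefect, Int.cast_add, Int.cast_sub, ← hδ, schreier_mul_section]
  rw [← schreier_mul, ← RightCosets.mul_mul]
  ring

namespace IsSection

variable (hσ : IsSection H σ)
include hσ

theorem mk_mul (x : RightCosets H) (g : G) :
    (Quotient.mk _ (σ x * g) : RightCosets H) = x.mulRight g :=
  congrArg (mulRight · g) (hσ x)

theorem schreier_mem (x : RightCosets H) (g : G) : schreier σ x g ∈ H := by
  have h : (QuotientGroup.rightRel H) (σ x * g) (σ (x.mulRight g)) :=
    Quotient.exact ((hσ.mk_mul x g).trans (hσ _).symm)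
  rw [QuotientGroup.rightRel_apply] at h
  simpa [schreier, mul_assoc] using H.inv_mem h

variable [Fintype (RightCosets H)]

theorem transfer_apply {n : ℕ} (f : (Fin n → H) → QZ) (g : Fin n → G) :
    transfer H σ f g = ∑ x : RightCosets H,
      restrictTo H f fun i => schreier σ (x.mulRight ((List.ofFn g).take i).prod) (g i) := by
  rw [transfer, finsum_eq_sum_of_fintype]
  refine Finset.sum_congr rfl fun x _ => congrArg _ (funext fun i => ?_)
  rw [List.prod_take_succ _ _ (by simp), List.getElem_ofFn, Fin.eta, hσ.mk_mul, hσ.mk_mul,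
    RightCosets.mul_mul]
  rfl

theorem transfer_cup3_apply {a : G → ℚ} (b : G → ℚ) {δ : G → G → ℤ}
    (hδ : ∀ g h, a g + a h - a (g * h) = δ g h) (g : Fin 3 → G) :
    transfer H σ (cup3 (fun h : H => a h) (fun h : H => b h)) g =
      ∑ x : RightCosets H, δ (schreier σ x (g 0)) (schreier σ (x.mulRight (g 0)) (g 1)) •
        (b (schreier σ (x.mulRight (g 0 * g 1)) (g 2)) : QZ) := by
  rw [hσ.transfer_apply]
  refine Finset.sum_congr rfl fun x _ => ?_
  rw [restrictTo, dif_pos fun i => hσ.schreier_mem _ _]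
  simp only [cup3, List.ofFn_succ, Fin.succ_zero_eq_one, Fin.succ_one_eq_two, Fin.val_zero,
    Fin.val_one, Fin.val_two, List.take_zero, List.take_succ_cons, List.prod_nil,
    List.prod_cons, _root_.mul_one, RightCosets.mul_one, Subgroup.coe_mul, hδ,
    ← zsmul_eq_mul, AddCircle.coe_zsmul]

theorem isCoboundary_transfer_cup3 (a b : G → ℚ) (ha : IsChar fun g => (a g : QZ))
    (hb : IsChar fun h : H => (b h : QZ))
    (hb₀ : ∀ g, ∑ x : RightCosets H, (b (schreier σ x g) : QZ) = 0) :
    IsCoboundary (transfer H σ (cup3 (fun h : H => a h) (fun h : H => b h))) := by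
  choose δ hδ using ha.exists_int_defect
  set ψ : G → QZ := fun g => b g
  set f := schreierDefect σ δ
  have hψ (x : RightCosets H) (g h : G) :
      ψ (schreier σ (x.mulRight g) h) = ψ (schreier σ x (g * h)) - ψ (schreier σ x g) := by
    rw [eq_sub_iff_add_eq', schreier_mul]
    exact (hb ⟨_, hσ.schreier_mem x g⟩ ⟨_, hσ.schreier_mem _ h⟩).symm
  refine ⟨fun g => ∑ x, f x (g 0) • ψ (schreier σ (x.mulRight (g 0)) (g 1)), funext fun g => ?_⟩
  rw [cochainD_two, hσ.transfer_cup3_apply b hδ]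
  simp only [Matrix.cons_val_zero, Matrix.cons_val_one, defect_schreier_schreier hδ, add_smul,
    sub_smul, Finset.sum_add_distrib, Finset.sum_sub_distrib]
  have hcores : ∑ x : RightCosets H,
      δ (g 0) (g 1) • ψ (schreier σ (x.mulRight (g 0 * g 1)) (g 2)) = 0 := by
    rw [← Finset.smul_sum, sum_mulRight (g 0 * g 1) fun x => ψ (schreier σ x (g 2)), hb₀,
      smul_zero]
  have hsplit : ∑ x : RightCosets H, f x (g 0) • ψ (schreier σ (x.mulRight (g 0 * g 1)) (g 2)) =
      ∑ x, f x (g 0) • ψ (schreier σ (x.mulRight (g 0)) (g 1 * g 2)) -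
        ∑ x, f x (g 0) • ψ (schreier σ (x.mulRight (g 0)) (g 1)) := by
    rw [← Finset.sum_sub_distrib]
    refine Finset.sum_congr rfl fun x _ => ?_
    rw [RightCosets.mul_mul, hψ, smul_sub]
  have hshift : ∑ x : RightCosets H,
      f (x.mulRight (g 0)) (g 1) • ψ (schreier σ (x.mulRight (g 0 * g 1)) (g 2)) =
        ∑ x, f x (g 1) • ψ (schreier σ (x.mulRight (g 1)) (g 2)) := by
    simp only [RightCosets.mul_mul]
    exact sum_mulRight (g 0) fun y => f y (g 1) • ψ (schreier σ (y.mulRight (g 1)) (g 2))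
  rw [hcores, hsplit, hshift]
  abel

end IsSection

end Transfer

theorem ZMod.coe_val_div_add {p : ℕ} [NeZero p] (x y : ZMod p) :
    ((((x + y).val : ℚ) / p : ℚ) : QZ) = ((x.val : ℚ) / p : ℚ) + ((y.val : ℚ) / p : ℚ) := by
  rw [← AddCircle.coe_add, ← add_div, eq_comm, ← sub_eq_zero, ← AddCircle.coe_sub,
    AddCircle.coe_eq_zero_iff, ZMod.val_add]
  refine ⟨((x.val + y.val) / p : ℕ), ?_⟩
  have hp : (p : ℚ) ≠ 0 := Nat.cast_ne_zero.2 (NeZero.ne p)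
  rw [zsmul_one, eq_sub_iff_add_eq, eq_div_iff hp, add_mul, div_mul_cancel₀ _ hp,
    Int.cast_natCast, ← Nat.cast_mul, ← Nat.cast_add, Nat.div_add_mod', Nat.cast_add]

noncomputable def ZMod.valDiv (p : ℕ) [NeZero p] : ZMod p →+ QZ :=
  AddMonoidHom.mk' (fun z => ((z.val : ℚ) / p : ℚ)) ZMod.coe_val_div_add

namespace Heis

variable {p : ℕ}

theorem ext_iff {x y : Heis p} : x = y ↔ x.1 = y.1 ∧ x.2.1 = y.2.1 ∧ x.2.2 = y.2.2 :=
  ⟨fun h => h ▸ ⟨rfl, rfl, rfl⟩, fun ⟨h₁, h₂, h₃⟩ => Prod.ext h₁ (Prod.ext h₂ h₃)⟩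

@[simp] theorem fst_mul (x y : Heis p) : (x * y).1 = x.1 + y.1 := rfl
@[simp] theorem snd_mul (x y : Heis p) : (x * y).2.1 = x.2.1 + y.2.1 := rfl
@[simp] theorem thd_mul (x y : Heis p) : (x * y).2.2 = x.2.2 + y.2.2 + x.1 * y.2.1 := rfl
@[simp] theorem fst_inv (x : Heis p) : x⁻¹.1 = -x.1 := rfl
@[simp] theorem snd_inv (x : Heis p) : x⁻¹.2.1 = -x.2.1 := rfl
@[simp] theorem thd_inv (x : Heis p) : x⁻¹.2.2 = -x.2.2 + x.1 * x.2.1 := rfl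
@[simp] theorem fst_one : (1 : Heis p).1 = 0 := rfl
@[simp] theorem snd_one : (1 : Heis p).2.1 = 0 := rfl
@[simp] theorem thd_one : (1 : Heis p).2.2 = 0 := rfl
@[simp] theorem A_coords : (A p).1 = 1 ∧ (A p).2.1 = 0 ∧ (A p).2.2 = 0 := ⟨rfl, rfl, rfl⟩
@[simp] theorem B_coords : (B p).1 = 0 ∧ (B p).2.1 = 1 ∧ (B p).2.2 = 0 := ⟨rfl, rfl, rfl⟩

theorem mem_Hsub {x : Heis p} : x ∈ Hsub p ↔ x.1 = 0 := Iff.rfl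

@[simp] theorem commutator_A_B_coords :
    ⁅A p, B p⁆.1 = 0 ∧ ⁅A p, B p⁆.2.1 = 0 ∧ ⁅A p, B p⁆.2.2 = 1 := by
  simp [commutatorElement_def]

theorem coords_pow {x : Heis p} (hx : x.1 * x.2.1 = 0) (n : ℕ) :
    (x ^ n).1 = n * x.1 ∧ (x ^ n).2.1 = n * x.2.1 ∧ (x ^ n).2.2 = n * x.2.2 := by
  induction n with
  | zero => simp
  | succ n ih =>
    simp only [pow_succ, fst_mul, snd_mul, thd_mul, ih.1, ih.2.1, ih.2.2]
    push_cast
    exact ⟨by ring, by ring, by linear_combination (n : ZMod p) * hx⟩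

theorem relations :
    A p ^ p = 1 ∧ B p ^ p = 1 ∧ ⁅A p, B p⁆ ^ p = 1 ∧
      ⁅A p, ⁅A p, B p⁆⁆ = 1 ∧ ⁅B p, ⁅A p, B p⁆⁆ = 1 := by
  simp [ext_iff, commutatorElement_def, coords_pow]

theorem Hsub_eq_closure [NeZero p] : Hsub p = Subgroup.closure {B p, ⁅A p, B p⁆} := by
  refine le_antisymm (fun x hx => ?_) ((Subgroup.closure_le _).2 ?_)
  · have hx : x = B p ^ x.2.1.val * ⁅A p, B p⁆ ^ x.2.2.val := by
      simp [ext_iff, coords_pow, mem_Hsub.1 hx]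
    rw [hx]
    exact mul_mem (pow_mem (Subgroup.subset_closure (by simp)) _)
      (pow_mem (Subgroup.subset_closure (by simp)) _)
  · rintro x (rfl | rfl) <;> simp [mem_Hsub]

instance [NeZero p] : Fintype (Heis p) := inferInstanceAs (Fintype (ZMod p × ZMod p × ZMod p))

theorem mk_eq_mk_iff {a b : Heis p} :
    (Quotient.mk _ a : RightCosets (Hsub p)) = Quotient.mk _ b ↔ a.1 = b.1 := by
  rw [Quotient.eq, QuotientGroup.rightRel_apply, mem_Hsub, fst_mul, fst_inv, add_neg_eq_zero,
    eq_comm]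

/-- `sndLift` lifts the character `(a, b, c) ↦ b/p` of `T` extending `e₁^∨`; on `H`, `thdLift`
lifts `e₂^∨`. -/
def sndLift (g : Heis p) : ℚ := (g.2.1.val : ℚ) / p

def thdLift (g : Heis p) : ℚ := (g.2.2.val : ℚ) / p

theorem isChar_sndLift [NeZero p] : IsChar fun g : Heis p => (sndLift g : QZ) :=
  fun g h => map_add (ZMod.valDiv p) g.2.1 h.2.1

theorem isChar_thdLift_Hsub [NeZero p] : IsChar fun h : Hsub p => (thdLift (h : Heis p) : QZ) :=
  fun g h => by
    simp only [thdLift, Subgroup.coe_mul, thd_mul, mem_Hsub.1 g.2, zero_mul, add_zero]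
    exact map_add (ZMod.valDiv p) _ _

section Section

variable {σ : RightCosets (Hsub p) → Heis p}

theorem snd_schreier (x : RightCosets (Hsub p)) (g : Heis p) :
    (schreier σ x g).2.1 = (σ x).2.1 + g.2.1 - (σ (x.mulRight g)).2.1 := by
  simp [schreier, sub_eq_add_neg]

variable (hσ : IsSection (Hsub p) σ)
include hσ

theorem fst_section_mulRight (x : RightCosets (Hsub p)) (g : Heis p) :
    (σ (x.mulRight g)).1 = (σ x).1 + g.1 := by
  rw [← fst_mul, ← mk_eq_mk_iff, hσ, hσ.mk_mul]

theorem bijective_fst_section : Function.Bijective fun x => (σ x).1 := by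
  refine ⟨fun x y hxy => ?_, fun t => ⟨Quotient.mk _ (t, 0, 0), ?_⟩⟩
  · rw [← hσ x, ← hσ y, mk_eq_mk_iff.2 hxy]
  · exact mk_eq_mk_iff.1 (hσ _)

theorem thd_schreier (x : RightCosets (Hsub p)) (g : Heis p) :
    (schreier σ x g).2.2 = (σ x).2.2 + g.2.2 - (σ (x.mulRight g)).2.2 + (σ x).1 * g.2.1 := by
  simp only [schreier, thd_mul, fst_mul, thd_inv, snd_inv, fst_section_mulRight hσ]
  ring

variable [NeZero p]

theorem sum_snd_schreier (g : Heis p) : ∑ x, (schreier σ x g).2.1 = 0 := by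
  simp only [snd_schreier, Finset.sum_sub_distrib, Finset.sum_add_distrib,
    RightCosets.sum_mulRight g fun x => (σ x).2.1, Finset.sum_const, Finset.card_univ,
    Fintype.card_of_bijective (bijective_fst_section hσ), ZMod.card, nsmul_eq_mul,
    ZMod.natCast_self]
  ring

theorem sum_thd_schreier (hp : p.Prime) (hodd : Odd p) (g : Heis p) :
    ∑ x, (schreier σ x g).2.2 = 0 := by
  have : Fact p.Prime := ⟨hp⟩
  have hsum : ∑ x, (σ x).1 = 0 := by
    rw [Fintype.sum_bijective _ (bijective_fst_section hσ) _ (· ^ 1) fun _ => (pow_one _).symm]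
    refine FiniteField.sum_pow_lt_card_sub_one _ _ ?_
    rw [ZMod.card]
    have := hp.two_le
    have := Nat.odd_iff.1 hodd
    omega
  simp only [thd_schreier hσ, Finset.sum_add_distrib, Finset.sum_sub_distrib, ← Finset.sum_mul,
    RightCosets.sum_mulRight g fun x => (σ x).2.2, hsum, Finset.sum_const, Finset.card_univ,
    Fintype.card_of_bijective (bijective_fst_section hσ), ZMod.card, nsmul_eq_mul,
    ZMod.natCast_self]
  ring

theorem sum_sndLift_schreier (g : Heis p) : ∑ x, (sndLift (schreier σ x g) : QZ) = 0 :=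
  (map_sum (ZMod.valDiv p) _ _).symm.trans (by rw [sum_snd_schreier hσ, map_zero])

theorem sum_thdLift_schreier (hp : p.Prime) (hodd : Odd p) (g : Heis p) :
    ∑ x, (thdLift (schreier σ x g) : QZ) = 0 :=
  (map_sum (ZMod.valDiv p) _ _).symm.trans (by rw [sum_thd_schreier hσ hp hodd, map_zero])

end Section

end Heis

/-- Let `p` be an odd prime and `T` the Heisenberg group of order `p³`, generated by
`A, B` with `A^p = B^p = [A,B]^p = [A,[A,B]] = [B,[A,B]] = 1`; let
`H = ⟨B, [A,B]⟩ ≅ (ℤ/p)²` with dual basis `e₁^∨, e₂^∨` (`e₁ = B`, `e₂ = [A,B]`).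
Then `Cores_H^T(e₁^∨ ∪ e₁^∨) = 0` and `Cores_H^T(e₁^∨ ∪ e₂^∨) = 0` in `H³(T, ℚ/ℤ)`:
the transfers of the corresponding 3-cocycles are coboundaries. -/
theorem stmt9 (p : ℕ) (hp : p.Prime) (hodd : Odd p)
    (σ : Quotient (QuotientGroup.rightRel (Heis.Hsub p)) → Heis p)
    (hσ : IsSection (Heis.Hsub p) σ) :
    (Heis.A p ^ p = 1 ∧ Heis.B p ^ p = 1 ∧
      ⁅Heis.A p, Heis.B p⁆ ^ p = 1 ∧
      ⁅Heis.A p, ⁅Heis.A p, Heis.B p⁆⁆ = 1 ∧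
      ⁅Heis.B p, ⁅Heis.A p, Heis.B p⁆⁆ = 1) ∧
    Heis.Hsub p = Subgroup.closure {Heis.B p, ⁅Heis.A p, Heis.B p⁆} ∧
    IsCoboundary (transfer (Heis.Hsub p) σ (cup3 l1 l1)) ∧
    IsCoboundary (transfer (Heis.Hsub p) σ (cup3 l1 l2)) := by
  have : NeZero p := ⟨hp.ne_zero⟩
  refine ⟨Heis.relations, Heis.Hsub_eq_closure, ?_, ?_⟩
  · exact hσ.isCoboundary_transfer_cup3 Heis.sndLift Heis.sndLift Heis.isChar_sndLift
      (fun g h => Heis.isChar_sndLift (g : Heis p) h) (Heis.sum_sndLift_schreier hσ)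
  · exact hσ.isCoboundary_transfer_cup3 Heis.sndLift Heis.thdLift Heis.isChar_sndLift
      Heis.isChar_thdLift_Hsub (Heis.sum_thdLift_schreier hσ hp hodd)
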